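/- Let n be sufficiently large, let k be an integer with log n ≤ k ≤ √n, and let 0 ≤ d ≤ k. Then the number of prefix normal binary words w of length n with |w[1,k]|₁ = d is at most 2ⁿ · (1 − P(Bin(k,1/2) > d))^(⌊√n⌋ − 1), where Bin(k,1/2) denotes a binomial random variable with k trials and success probability 1/2. -/

import Mathlib

/-- Number of ones of the infinite binary word `w` in the 0-indexed
half-open interval of positions `[a, b)`. Thus `cnt w j (j+k)` is the number
of 1s in the subword `w[j+1, j+k]` (1-indexed), and `cnt w 0 k` is the number
of 1s in the prefix of length `k`. -/
def cnt (w : ℕ → Bool) (a b : ℕ) : ℕ :=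
  ((Finset.Ico a b).filter (fun i => w i = true)).card

/-- Extend a binary word of length `n` to an infinite word by `false`s. -/
def ext {n : ℕ} (w : Fin n → Bool) : ℕ → Bool :=
  fun i => if h : i < n then w ⟨i, h⟩ else false

/-- A binary word of length `n` is prefix normal if the number of 1s in any
subword is at most the number of 1s in the prefix of the same length. -/
def IsPrefixNormal (n : ℕ) (w : ℕ → Bool) : Prop :=
  ∀ k j : ℕ, k ≤ n → j + k ≤ n → cnt w j (j + k) ≤ cnt w 0 k

/-- `P(Bin(k, 1/2) > d) = Σ_{i=d+1}^k C(k,i) 2^(-k)`, the probability that a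
binomial random variable with `k` trials and success probability `1/2`
exceeds `d`. -/
noncomputable def binGT (k d : ℕ) : ℝ :=
  ∑ i ∈ Finset.Icc (d + 1) k, (k.choose i : ℝ) / 2 ^ k


/-!
Prefix normality caps the number of ones in every length-`k` factor by the number `d` of ones in
the prefix of length `k`. Cutting `w[k+1, ⌊√n⌋k]` into `⌊√n⌋ - 1` disjoint blocks of length `k`,
each block must therefore lie among the `2^k (1 - P(Bin(k,1/2) > d))` words with at most `d` ones,
independently of the other blocks, while the remaining letters are unconstrained.
-/

open Finset hiding ext

lemma ext_injective {n : ℕ} : Function.Injective (ext : (Fin n → Bool) → ℕ → Bool) := by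
  intro w₁ w₂ h
  funext i
  simpa [ext] using congrFun h i

lemma cnt_add_eq_card_filter (w : ℕ → Bool) (a k : ℕ) :
    cnt w a (a + k) = #{t : Fin k | w (a + t) = true} := by
  rw [cnt, card_filter, sum_Ico_eq_sum_range, add_tsub_cancel_left, ← Fin.sum_univ_eq_sum_range,
    card_filter]

lemma card_filter_lt_card_eq_sum_choose (k d : ℕ) :
    #{s : Finset (Fin k) | d < #s} = ∑ i ∈ Icc (d + 1) k, k.choose i := by
  rw [card_eq_sum_card_fiberwise (f := card) (t := Icc (d + 1) k)]
  · refine sum_congr rfl fun i hi => ?_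
    have hfiber : ({s ∈ {s : Finset (Fin k) | d < #s} | #s = i} : Finset _) =
        powersetCard i univ := by
      rw [filter_filter, powersetCard_eq_filter, powerset_univ]
      exact filter_congr fun s _ => by simp only [mem_Icc] at hi; omega
    rw [hfiber, card_powersetCard, card_univ, Fintype.card_fin]
  · intro s hs
    simp only [coe_filter, mem_univ, true_and, Set.mem_ofPred_eq] at hs
    simpa [Nat.succ_le_iff, hs] using card_le_univ s

lemma binGT_eq_card_div (k d : ℕ) :
    binGT k d = #{s : Finset (Fin k) | d < #s} / 2 ^ k := by
  rw [binGT, ← sum_div, card_filter_lt_card_eq_sum_choose]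
  push_cast
  rfl

lemma one_sub_binGT_eq_card_div (k d : ℕ) :
    1 - binGT k d = #{s : Finset (Fin k) | #s ≤ d} / 2 ^ k := by
  have htotal : (#{s : Finset (Fin k) | #s ≤ d} + #{s : Finset (Fin k) | d < #s} : ℝ) = 2 ^ k := by
    exact_mod_cast (by simpa [not_le, card_univ, Fintype.card_finset] using
      card_filter_add_card_filter_not (s := univ) (fun s : Finset (Fin k) => #s ≤ d))
  rw [binGT_eq_card_div, eq_div_iff (by positivity), sub_mul, div_mul_cancel₀ _ (by positivity),
    one_mul, ← htotal, add_sub_cancel_right]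

lemma exists_eq_add_mul_add {a k m p : ℕ} (h₁ : a ≤ p) (h₂ : p < a + m * k) :
    ∃ j < m, ∃ t < k, p = a + j * k + t := by
  have hk : 0 < k := Nat.pos_of_ne_zero fun hk => by simp [hk] at h₂; omega
  refine ⟨(p - a) / k, (Nat.div_lt_iff_lt_mul hk).2 (by omega), (p - a) % k, Nat.mod_lt _ hk, ?_⟩
  have := Nat.div_add_mod' (p - a) k
  omega

theorem card_filter_forall_cnt_block_le (n a k m d : ℕ) (h : a + m * k ≤ n) :
    #{w : Fin n → Bool | ∀ j < m, cnt (ext w) (a + j * k) (a + j * k + k) ≤ d} ≤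
      #{s : Finset (Fin k) | #s ≤ d} ^ m * 2 ^ (n - m * k) := by
  set r := n - (a + m * k)
  -- `w` is recovered from its first `a` letters, the sets of ones of its blocks and its last `r`
  -- letters, and the block constraint only restricts the middle component.
  let encode (w : Fin n → Bool) : (Fin m → Finset (Fin k)) × (Fin a → Bool) × (Fin r → Bool) :=
    (fun j => {t | ext w (a + j * k + t) = true}, fun i => ext w i, fun i => ext w (a + m * k + i))
  calc _ ≤ #(Fintype.piFinset (fun _ => {s : Finset (Fin k) | #s ≤ d}) ×ˢ
        (univ : Finset ((Fin a → Bool) × (Fin r → Bool)))) := by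
        refine card_le_card_of_injOn encode (fun w hw => ?_) (fun w₁ _ w₂ _ he => ?_)
        · simp only [coe_filter, mem_univ, true_and, Set.mem_ofPred_eq] at hw
          simp only [encode, coe_product, Set.mem_prod, mem_coe, Fintype.mem_piFinset, mem_filter,
            mem_univ, true_and, and_true]
          intro j
          rw [← cnt_add_eq_card_filter]
          exact hw j j.2
        · simp only [encode, Prod.mk.injEq] at he
          obtain ⟨hblock, hpre, hrest⟩ := he
          apply ext_injective
          funext p
          by_cases hpa : p < a
          · exact congrFun hpre ⟨p, hpa⟩
          by_cases hpm : p < a + m * k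
          · obtain ⟨j, hj, t, ht, rfl⟩ := exists_eq_add_mul_add (not_lt.1 hpa) hpm
            simpa using congrArg (⟨t, ht⟩ ∈ ·) (congrFun hblock ⟨j, hj⟩)
          by_cases hpn : p < n
          · simpa [Nat.add_sub_cancel' (not_lt.1 hpm)] using
              congrFun hrest ⟨p - (a + m * k), by omega⟩
          · simp [ext, hpn]
    _ = _ := by
        rw [card_product, Fintype.card_piFinset, prod_const, card_univ, card_univ,
          Fintype.card_prod, Fintype.card_fun, Fintype.card_fun, Fintype.card_bool,
          Fintype.card_fin, Fintype.card_fin, Fintype.card_fin, ← pow_add]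
        congr 2
        omega

/-- For sufficiently large `n`, integers `k` with `log n ≤ k ≤ √n` and
`0 ≤ d ≤ k`: the number of prefix normal binary words `w` of length `n` with
`|w[1,k]|₁ = d` is at most `2^n (1 - P(Bin(k,1/2) > d))^(⌊√n⌋ - 1)`. -/
theorem prefix_normal_block_bound :
    ∃ N : ℕ, ∀ n : ℕ, N ≤ n → ∀ k d : ℕ,
      Real.log n ≤ (k : ℝ) → (k : ℝ) ≤ Real.sqrt n → d ≤ k →
      (Set.ncard {w : Fin n → Bool |
          IsPrefixNormal n (ext w) ∧ cnt (ext w) 0 k = d} : ℝ) ≤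
        2 ^ n * (1 - binGT k d) ^ (Nat.sqrt n - 1) := by
  refine ⟨0, fun n _ k d _ hk _ => ?_⟩
  have hkm : k ≤ Nat.sqrt n := Real.nat_floor_real_sqrt_eq_nat_sqrt ▸ Nat.le_floor hk
  set m := Nat.sqrt n
  have hblocks : k + (m - 1) * k ≤ n := by
    calc k + (m - 1) * k ≤ m + (m - 1) * m := by gcongr
      _ = m * m := by cases m <;> simp [add_mul, add_comm]
      _ ≤ n := Nat.sqrt_le n
  have hsub : {w : Fin n → Bool | IsPrefixNormal n (ext w) ∧ cnt (ext w) 0 k = d} ⊆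
      ↑({w | ∀ j < m - 1, cnt (ext w) (k + j * k) (k + j * k + k) ≤ d} : Finset (Fin n → Bool)) := by
    rintro w ⟨hnormal, rfl⟩
    simp only [coe_filter, mem_univ, true_and, Set.mem_ofPred_eq]
    intro j hj
    exact hnormal k (k + j * k) (by omega) (le_trans (by nlinarith) hblocks)
  calc (Set.ncard _ : ℝ) ≤ #{s : Finset (Fin k) | #s ≤ d} ^ (m - 1) * 2 ^ (n - (m - 1) * k) := by
        exact_mod_cast (Set.ncard_le_ncard hsub).trans_eq (Set.ncard_coe_finset _) |>.trans
          (card_filter_forall_cnt_block_le n k k (m - 1) d hblocks)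
    _ = 2 ^ n * (#{s : Finset (Fin k) | #s ≤ d} / 2 ^ k) ^ (m - 1) := by
        have h2n : (2 : ℝ) ^ n = (2 ^ k) ^ (m - 1) * 2 ^ (n - (m - 1) * k) := by
          rw [← pow_mul, ← pow_add, mul_comm k, Nat.add_sub_cancel' (by omega)]
        rw [h2n, div_pow]
        field_simp
    _ = 2 ^ n * (1 - binGT k d) ^ (m - 1) := by rw [one_sub_binGT_eq_card_div]
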